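/- arXiv:2506.01612 — 2 statements merged into one kernel-verified Lean document; each statement's English description precedes it below -/
import Mathlib

section
/- Let G = (V,E) be an infinite, connected, locally finite simple graph that is bipartite (V admits a partition V₁, V₂ such that every edge has exactly one endpoint in each part). Then for every q ∈ [0,1], p_c(q) = p_c(1−q), where p_c(q) is the critical percolation parameter of the random 2-lift at switching parameter q. -/
open MeasureTheory ProbabilityTheory

noncomputable def bernoulliMeasure (p : ℝ) : Measure Bool :=
  (ENNReal.ofReal p ⊓ 1) • Measure.dirac true + (1 - ENNReal.ofReal p ⊓ 1) • Measure.dirac false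

/-- `μ` is the law of an i.i.d. family of Bernoulli(`p`) random variables indexed by `ι`. -/
def IsBernoulliFamily {ι : Type*} (μ : Measure (ι → Bool)) (p : ℝ) : Prop :=
  IsProbabilityMeasure μ ∧
    iIndepFun (fun i ω => ω i) μ ∧
    ∀ i : ι, μ.map (fun ω => ω i) = _root_.bernoulliMeasure p

variable {V : Type*}

/-- The 2-lift of `G` determined by the switching configuration `η`. -/
def twoLift (G : SimpleGraph V) (η : Sym2 V → Bool) : SimpleGraph (V × Bool) where
  Adj x y := G.Adj x.1 y.1 ∧ y.2 = xor (η s(x.1, y.1)) x.2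
  symm := ⟨by
    rintro ⟨u, i⟩ ⟨v, j⟩ ⟨h, hj⟩
    refine ⟨h.symm, ?_⟩
    simp only at hj ⊢
    subst hj
    rw [Sym2.eq_swap]
    simp [← Bool.xor_assoc]⟩
  loopless := ⟨fun x h => G.loopless.irrefl x.1 h.1⟩

/-- The subgraph of `H` of edges open in the percolation configuration `ω`. -/
def openSubgraph {W : Type*} (H : SimpleGraph W) (ω : Sym2 W → Bool) : SimpleGraph W where
  Adj x y := H.Adj x y ∧ ω s(x, y) = true
  symm := ⟨fun x y h => ⟨h.1.symm, by rw [Sym2.eq_swap]; exact h.2⟩⟩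
  loopless := ⟨fun x h => H.loopless.irrefl x h.1⟩

/-- The open cluster of `x` in `H` for the percolation configuration `ω`. -/
def percCluster {W : Type*} (H : SimpleGraph W) (ω : Sym2 W → Bool) (x : W) : Set W :=
  {y | (openSubgraph H ω).Reachable x y}

/-- The annealed law on pairs (switching configuration, percolation configuration):
product of an i.i.d. Bernoulli(`q`) switching family and an i.i.d. Bernoulli(`p`)
percolation family. -/
def IsAnnealed {V : Type*} (μ : Measure ((Sym2 V → Bool) × (Sym2 (V × Bool) → Bool)))
    (q p : ℝ) : Prop :=
  ∃ (ν₁ : Measure (Sym2 V → Bool)) (ν₂ : Measure (Sym2 (V × Bool) → Bool)),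
    IsBernoulliFamily ν₁ q ∧ IsBernoulliFamily ν₂ p ∧ μ = ν₁.prod ν₂

/-- `θ(p,q)`: the annealed probability that the cluster of the lift `(o, false)` of the
origin `o` is infinite. -/
noncomputable def annealedTheta (G : SimpleGraph V) (o : V) (p q : ℝ) : ℝ :=
  sSup {t : ℝ | ∃ μ : Measure ((Sym2 V → Bool) × (Sym2 (V × Bool) → Bool)),
    IsAnnealed μ q p ∧
      t = (μ {z | (percCluster (twoLift G z.1) z.2 (o, false)).Infinite}).toReal}

/-- `p_c(q) = sup {p ∈ [0,1] : θ(p,q) = 0}`. -/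
noncomputable def annealedPc (G : SimpleGraph V) (o : V) (q : ℝ) : ℝ :=
  sSup {p : ℝ | p ∈ Set.Icc (0 : ℝ) 1 ∧ annealedTheta G o p q = 0}

/-- `G` is vertex-transitive. -/
def IsVertexTransitive (G : SimpleGraph V) : Prop :=
  ∀ u v : V, ∃ φ : G ≃g G, φ u = v


section AuxProof

lemma key_inf_aux (q : ℝ) : ENNReal.ofReal (1 - q) ⊓ 1 = 1 - (ENNReal.ofReal q ⊓ 1) := by
  rcases le_or_gt q 0 with h | h
  · rw [ENNReal.ofReal_of_nonpos h,
      inf_eq_right.mpr (ENNReal.one_le_ofReal.mpr (by linarith))]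
    simp
  rcases le_or_gt 1 q with h1 | h1
  · rw [ENNReal.ofReal_of_nonpos (by linarith : 1 - q ≤ 0),
      inf_eq_right.mpr (ENNReal.one_le_ofReal.mpr h1), tsub_self]
    simp
  · rw [inf_eq_left.mpr (ENNReal.ofReal_le_one.mpr h1.le),
      inf_eq_left.mpr (ENNReal.ofReal_le_one.mpr (by linarith)),
      ENNReal.ofReal_sub _ h.le, ENNReal.ofReal_one]

lemma bernoulli_map_not_aux (q : ℝ) :
    (_root_.bernoulliMeasure q).map Bool.not = _root_.bernoulliMeasure (1 - q) := by
  have hnot : Measurable Bool.not := measurable_of_countable _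
  rw [_root_.bernoulliMeasure, Measure.map_add _ _ hnot, Measure.map_smul, Measure.map_smul,
    Measure.map_dirac' hnot, Measure.map_dirac' hnot, _root_.bernoulliMeasure, key_inf_aux,
    ENNReal.sub_sub_cancel ENNReal.one_ne_top inf_le_right, add_comm]
  rfl

lemma measurableSet_bool_aux (s : Set Bool) : MeasurableSet s := (Set.to_countable s).measurableSet

lemma isBernoulliFamily_map_not_aux {ι : Type*} {μ : Measure (ι → Bool)} {q : ℝ}
    (h : IsBernoulliFamily μ q) :
    IsBernoulliFamily (μ.map (fun ω i => !(ω i))) (1 - q) := by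
  obtain ⟨hp, hind, hmarg⟩ := h
  have hT : Measurable (fun ω : ι → Bool => fun i => !(ω i)) :=
    measurable_pi_lambda _ fun i =>
      (measurable_of_countable Bool.not).comp (measurable_pi_apply i)
  refine ⟨Measure.isProbabilityMeasure_map hT.aemeasurable, ?_, ?_⟩
  · rw [iIndepFun_iff_measure_inter_preimage_eq_mul]
    intro S sets hsets
    have hA : MeasurableSet (⋂ i ∈ S, (fun ω : ι → Bool => ω i) ⁻¹' sets i) :=
      MeasurableSet.biInter (S.countable_toSet) fun i _ =>
        measurable_pi_apply i (measurableSet_bool_aux _)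
    rw [Measure.map_apply hT hA]
    have hpre : (fun ω : ι → Bool => fun i => !(ω i)) ⁻¹'
        (⋂ i ∈ S, (fun ω : ι → Bool => ω i) ⁻¹' sets i)
        = ⋂ i ∈ S, (fun ω : ι → Bool => ω i) ⁻¹' (Bool.not ⁻¹' sets i) := by
      ext ω; simp
    rw [hpre, hind.measure_inter_preimage_eq_mul S
      (sets := fun i => Bool.not ⁻¹' sets i) (fun i _ => measurableSet_bool_aux _)]
    refine Finset.prod_congr rfl fun i hi => ?_
    rw [Measure.map_apply hT (measurable_pi_apply i (measurableSet_bool_aux _))]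
    rfl
  · intro i
    rw [Measure.map_map (measurable_pi_apply i) hT]
    have h2 := (Measure.map_map (g := Bool.not) (f := fun ω : ι → Bool => ω i)
      (μ := μ) (measurable_of_countable _) (measurable_pi_apply i)).symm
    show Measure.map (Bool.not ∘ fun ω : ι → Bool => ω i) μ = _
    rw [h2, hmarg i, bernoulli_map_not_aux]

lemma isBernoulliFamily_map_reindex_aux {ι : Type*} {μ : Measure (ι → Bool)} {p : ℝ}
    (h : IsBernoulliFamily μ p) (σ : ι ≃ ι) :
    IsBernoulliFamily (μ.map (fun ω i => ω (σ i))) p := by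
  classical
  obtain ⟨hp, hind, hmarg⟩ := h
  have hT : Measurable (fun ω : ι → Bool => fun i => ω (σ i)) :=
    measurable_pi_lambda _ fun i => measurable_pi_apply (σ i)
  refine ⟨Measure.isProbabilityMeasure_map hT.aemeasurable, ?_, ?_⟩
  · rw [iIndepFun_iff_measure_inter_preimage_eq_mul]
    intro S sets hsets
    have hA : MeasurableSet (⋂ i ∈ S, (fun ω : ι → Bool => ω i) ⁻¹' sets i) :=
      MeasurableSet.biInter (S.countable_toSet) fun i _ =>
        measurable_pi_apply i (measurableSet_bool_aux _)
    rw [Measure.map_apply hT hA]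
    have hpre : (fun ω : ι → Bool => fun i => ω (σ i)) ⁻¹'
        (⋂ i ∈ S, (fun ω : ι → Bool => ω i) ⁻¹' sets i)
        = ⋂ j ∈ S.image σ, (fun ω : ι → Bool => ω j) ⁻¹' sets (σ.symm j) := by
      ext ω
      simp only [Set.mem_preimage, Set.mem_iInter, Finset.mem_image]
      constructor
      · rintro hh j ⟨i, hi, rfl⟩; simpa using hh i hi
      · intro hh i hi
        have := hh (σ i) ⟨i, hi, rfl⟩
        simpa using this
    rw [hpre, hind.measure_inter_preimage_eq_mul (S.image σ)
      (sets := fun j => sets (σ.symm j)) (fun i _ => measurableSet_bool_aux _),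
      Finset.prod_image (fun x _ y _ hxy => σ.injective hxy)]
    refine Finset.prod_congr rfl fun i hi => ?_
    rw [Measure.map_apply hT (measurable_pi_apply i (measurableSet_bool_aux _))]
    simp only [Equiv.symm_apply_apply]
    rfl
  · intro i
    rw [Measure.map_map (measurable_pi_apply i) hT]
    exact hmarg (σ i)

/-- vertex flip map -/
def flipMap (χ : V → Bool) : V × Bool → V × Bool := fun x => (x.1, xor (χ x.1) x.2)

lemma flipMap_involutive (χ : V → Bool) : Function.Involutive (flipMap χ) := by
  intro x
  simp [flipMap, ← Bool.xor_assoc]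

def flipPerm (χ : V → Bool) : Equiv.Perm (V × Bool) :=
  (flipMap_involutive χ).toPerm _

lemma sym2_flip_involutive (χ : V → Bool) :
    Function.Involutive (Sym2.map (flipMap χ)) := by
  intro z
  rw [Sym2.map_map]
  have : flipMap χ ∘ flipMap χ = id := funext (flipMap_involutive χ)
  rw [this, Sym2.map_id, id]

def sym2FlipPerm (χ : V → Bool) : Equiv.Perm (Sym2 (V × Bool)) :=
  (sym2_flip_involutive χ).toPerm _

lemma open_adj_flip (G : SimpleGraph V) (χ : V → Bool)
    (hχ : ∀ u v, G.Adj u v → χ v = !(χ u))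
    (η : Sym2 V → Bool) (ω : Sym2 (V × Bool) → Bool) (x y : V × Bool) :
    (openSubgraph (twoLift G fun e => !(η e))
        (fun e => ω (Sym2.map (flipMap χ) e))).Adj x y ↔
      (openSubgraph (twoLift G η) ω).Adj (flipMap χ x) (flipMap χ y) := by
  have key : ∀ a b i j : Bool, (j = xor (!b) i) ↔ (xor (!a) j = xor b (xor a i)) := by decide
  simp only [openSubgraph, twoLift, flipMap, Sym2.map_pair_eq]
  constructor
  · rintro ⟨⟨ha, hb⟩, hw⟩
    refine ⟨⟨ha, ?_⟩, hw⟩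
    rw [hχ _ _ ha]
    exact (key (χ x.1) _ _ _).mp hb
  · rintro ⟨⟨ha, hb⟩, hw⟩
    refine ⟨⟨ha, ?_⟩, hw⟩
    rw [hχ _ _ ha] at hb
    exact (key (χ x.1) _ _ _).mpr hb

lemma cluster_flip (G : SimpleGraph V) (o : V) (χ : V → Bool)
    (hχ : ∀ u v, G.Adj u v → χ v = !(χ u)) (hχo : χ o = false)
    (η : Sym2 V → Bool) (ω : Sym2 (V × Bool) → Bool) :
    percCluster (twoLift G fun e => !(η e)) (fun e => ω (Sym2.map (flipMap χ) e)) (o, false)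
      = flipMap χ ⁻¹' percCluster (twoLift G η) ω (o, false) := by
  let ψ : (openSubgraph (twoLift G fun e => !(η e)) (fun e => ω (Sym2.map (flipMap χ) e)))
      ≃g (openSubgraph (twoLift G η) ω) :=
    ⟨flipPerm χ, by intro a b; exact (open_adj_flip G χ hχ η ω a b).symm⟩
  ext y
  have h0 : flipMap χ (o, false) = (o, false) := by simp [flipMap, hχo]
  show (openSubgraph _ _).Reachable (o, false) y ↔
    flipMap χ y ∈ percCluster (twoLift G η) ω (o, false)
  constructor
  · intro hr
    have h1 : (openSubgraph (twoLift G η) ω).Reachable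
        (flipMap χ (o, false)) (flipMap χ y) := hr.map ψ.toHom
    rwa [h0] at h1
  · intro hr
    have : (openSubgraph (twoLift G η) ω).Reachable (ψ (o, false)) (ψ y) := by
      show (openSubgraph (twoLift G η) ω).Reachable (flipMap χ (o, false)) (flipMap χ y)
      rw [h0]; exact hr
    exact SimpleGraph.Iso.reachable_iff.mp this

lemma infinite_flip_preimage (χ : V → Bool) {s : Set (V × Bool)} :
    (flipMap χ ⁻¹' s).Infinite ↔ s.Infinite := by
  have himg : flipMap χ ⁻¹' s = flipMap χ '' s := by
    ext z
    constructor
    · intro hz; exact ⟨flipMap χ z, hz, flipMap_involutive χ z⟩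
    · rintro ⟨w, hw, rfl⟩
      show flipMap χ (flipMap χ w) ∈ s
      rw [flipMap_involutive χ w]; exact hw
  rw [himg, Set.infinite_image_iff ((flipMap_involutive χ).injective.injOn)]

lemma thetaSet_subset_aux (G : SimpleGraph V) (o : V) (χ : V → Bool)
    (hχ : ∀ u v, G.Adj u v → χ v = !(χ u)) (hχo : χ o = false) (p q : ℝ) :
    {t : ℝ | ∃ μ : Measure ((Sym2 V → Bool) × (Sym2 (V × Bool) → Bool)),
      IsAnnealed μ q p ∧
        t = (μ {z | (percCluster (twoLift G z.1) z.2 (o, false)).Infinite}).toReal} ⊆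
    {t : ℝ | ∃ μ : Measure ((Sym2 V → Bool) × (Sym2 (V × Bool) → Bool)),
      IsAnnealed μ (1 - q) p ∧
        t = (μ {z | (percCluster (twoLift G z.1) z.2 (o, false)).Infinite}).toReal} := by
  rintro t ⟨μ, ⟨ν₁, ν₂, h1, h2, rfl⟩, rfl⟩
  classical
  set E := {z : (Sym2 V → Bool) × (Sym2 (V × Bool) → Bool) |
    (percCluster (twoLift G z.1) z.2 (o, false)).Infinite} with hE
  set f : (Sym2 V → Bool) → (Sym2 V → Bool) := fun η e => !(η e) with hf
  set g : (Sym2 (V × Bool) → Bool) → (Sym2 (V × Bool) → Bool) :=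
    fun ω e => ω (sym2FlipPerm χ e) with hg
  have hfm : Measurable f :=
    measurable_pi_lambda _ fun e =>
      (measurable_of_countable Bool.not).comp (measurable_pi_apply e)
  have hgm : Measurable g := measurable_pi_lambda _ fun e => measurable_pi_apply _
  haveI : IsProbabilityMeasure ν₁ := h1.1
  haveI : IsProbabilityMeasure ν₂ := h2.1
  refine ⟨(ν₁.map f).prod (ν₂.map g),
    ⟨ν₁.map f, ν₂.map g, isBernoulliFamily_map_not_aux h1,
      isBernoulliFamily_map_reindex_aux h2 (sym2FlipPerm χ), rfl⟩, ?_⟩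
  have hinv : Function.Involutive (Prod.map f g) := by
    intro z
    have h1' : f (f z.1) = z.1 := by funext e; simp [hf]
    have h2' : g (g z.2) = z.2 := by
      funext e
      show z.2 (Sym2.map (flipMap χ) (Sym2.map (flipMap χ) e)) = z.2 e
      rw [sym2_flip_involutive χ e]
    exact Prod.ext h1' h2'
  let Φ : ((Sym2 V → Bool) × (Sym2 (V × Bool) → Bool)) ≃ᵐ
      ((Sym2 V → Bool) × (Sym2 (V × Bool) → Bool)) :=
    ⟨hinv.toPerm _, hfm.prodMap hgm, hfm.prodMap hgm⟩
  have hprod : (ν₁.map f).prod (ν₂.map g) = (ν₁.prod ν₂).map (Prod.map f g) :=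
    Measure.map_prod_map _ _ hfm hgm
  have happ : ((ν₁.prod ν₂).map Φ) E = (ν₁.prod ν₂) (Φ ⁻¹' E) :=
    MeasurableEquiv.map_apply Φ E
  have hpre : Φ ⁻¹' E = E := by
    ext z
    obtain ⟨η, ω⟩ := z
    show (percCluster (twoLift G (f η)) (g ω) (o, false)).Infinite ↔
      (percCluster (twoLift G η) ω (o, false)).Infinite
    show (percCluster (twoLift G fun e => !(η e))
        (fun e => ω (Sym2.map (flipMap χ) e)) (o, false)).Infinite ↔ _
    rw [cluster_flip G o χ hχ hχo η ω, infinite_flip_preimage χ]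
  have hΦ : (ν₁.prod ν₂).map (Prod.map f g) = (ν₁.prod ν₂).map Φ := rfl
  rw [hprod, hΦ, happ, hpre]

lemma theta_symm_aux (G : SimpleGraph V) (o : V) (χ : V → Bool)
    (hχ : ∀ u v, G.Adj u v → χ v = !(χ u)) (hχo : χ o = false) (p q : ℝ) :
    annealedTheta G o p q = annealedTheta G o p (1 - q) := by
  unfold annealedTheta
  congr 1
  apply Set.Subset.antisymm
  · exact thetaSet_subset_aux G o χ hχ hχo p q
  · have h := thetaSet_subset_aux G o χ hχ hχo p (1 - q)
    rwa [sub_sub_cancel] at h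

end AuxProof

/-- **Proposition (bipartite symmetry).** If `G` is an infinite, connected, locally finite
simple graph which is bipartite, then `p_c(q) = p_c(1-q)` for every `q ∈ [0,1]`. -/
theorem pc_bipartite_symm {V : Type*} (G : SimpleGraph V) (o : V)
    (hinf : Infinite V) (hconn : G.Connected)
    (hlf : ∀ v : V, (G.neighborSet v).Finite)
    (hbip : ∃ V₁ : Set V, ∀ u v : V, G.Adj u v → (u ∈ V₁ ↔ v ∉ V₁))
    (q : ℝ) (hq : q ∈ Set.Icc (0 : ℝ) 1) :
    annealedPc G o q = annealedPc G o (1 - q) := by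
  classical
  obtain ⟨V₁, hV₁⟩ := hbip
  set χ : V → Bool := fun v => xor (decide (v ∈ V₁)) (decide (o ∈ V₁)) with hχdef
  have hχo : χ o = false := by simp [hχdef]
  have hχ : ∀ u v, G.Adj u v → χ v = !(χ u) := by
    intro u v h
    have hv : v ∈ V₁ ↔ u ∉ V₁ := by have := hV₁ u v h; tauto
    by_cases hu : u ∈ V₁ <;> by_cases ho : o ∈ V₁ <;>
      simp [hχdef, hu, ho, hv.mpr, hv]
  unfold annealedPc
  congr 1
  ext p
  simp only [Set.mem_setOf_eq]
  rw [theta_symm_aux G o χ hχ hχo p q]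
end

section
/- Let G be an infinite, connected, locally finite, vertex-transitive simple graph that is not a tree, and let q ∈ (0,1). Then there exist r ∈ ℕ and p₀ > 0 such that for every vertex x of the 2-lift, the ν_q-probability that the subgraph of G_q(η) induced by Z(x,r) := π^{-1}(B_r(π(x))) is connected is at least p₀, where π is the covering map of the 2-lift and B_r denotes the ball of radius r in G. -/
open MeasureTheory ProbabilityTheory

variable {V : Type*}

section AuxLemmas
variable {G : SimpleGraph V}

lemma ball_finite (hconn : G.Connected) (hlf : ∀ v : V, (G.neighborSet v).Finite) (c : V) :
    ∀ r : ℕ, {w : V | G.dist c w ≤ r}.Finite := by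
  intro r
  induction r with
  | zero =>
    apply Set.Finite.subset (Set.finite_singleton c)
    intro w hw
    simp only [Set.mem_setOf_eq, Nat.le_zero] at hw
    have := (hconn.dist_eq_zero_iff (u := c) (v := w)).mp hw
    simp [this.symm]
  | succ n ih =>
    apply Set.Finite.subset (ih.union (Set.Finite.biUnion ih (fun v _ => hlf v)))
    intro w hw
    simp only [Set.mem_setOf_eq] at hw
    rcases Nat.lt_or_ge (G.dist c w) (n+1) with h | h
    · exact Or.inl (Nat.lt_succ_iff.mp h)
    · right
      have hd : G.dist c w = n + 1 := le_antisymm hw h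
      obtain ⟨p, hp⟩ := (hconn c w).exists_walk_length_eq_dist
      have hnil : ¬ p.reverse.Nil := by
        rw [SimpleGraph.Walk.not_nil_iff_lt_length]
        simp [hp, hd]
      obtain ⟨u, hadj, q, hq⟩ := SimpleGraph.Walk.not_nil_iff.mp hnil
      refine Set.mem_biUnion (x := u) ?_ hadj.symm
      have hql : q.length = n := by
        have := congrArg SimpleGraph.Walk.length hq
        simp only [SimpleGraph.Walk.length_reverse, SimpleGraph.Walk.length_cons, hp, hd] at this
        omega
      have : G.dist c u ≤ q.reverse.length := SimpleGraph.dist_le _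
      simpa [hql] using this

lemma dist_map_iso (hconn : G.Connected) (φ : G ≃g G) (u v : V) :
    G.dist (φ u) (φ v) = G.dist u v := by
  apply le_antisymm
  · obtain ⟨p, hp⟩ := hconn.exists_walk_length_eq_dist u v
    have := SimpleGraph.dist_le (p.map φ.toHom)
    rwa [SimpleGraph.Walk.length_map, hp] at this
  · obtain ⟨p, hp⟩ := hconn.exists_walk_length_eq_dist (φ u) (φ v)
    have := SimpleGraph.dist_le (p.map φ.symm.toHom)
    rw [SimpleGraph.Walk.length_map, hp] at this
    simpa using this

def walkParity (η : Sym2 V → Bool) {u v : V} (p : G.Walk u v) : Bool :=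
  (p.edges.map η).foldr xor false

@[simp] lemma walkParity_nil (η : Sym2 V → Bool) {u : V} :
    walkParity η (SimpleGraph.Walk.nil : G.Walk u u) = false := rfl

@[simp] lemma walkParity_cons (η : Sym2 V → Bool) {u v w : V} (h : G.Adj u v)
    (p : G.Walk v w) :
    walkParity η (SimpleGraph.Walk.cons h p) = xor (η s(u, v)) (walkParity η p) := rfl

lemma lift_walk_reachable (η : Sym2 V → Bool) (S : Set V) :
    ∀ {u v : V} (p : G.Walk u v) (hs : ∀ w ∈ p.support, w ∈ S) (i : Bool),
    ((twoLift G η).induce {y : V × Bool | y.1 ∈ S}).Reachable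
      ⟨(u, i), hs u p.start_mem_support⟩
      ⟨(v, xor (walkParity η p) i), hs v p.end_mem_support⟩ := by
  intro u v p
  induction p with
  | nil =>
    intro hs i
    simp only [walkParity_nil, Bool.false_xor]
    exact SimpleGraph.Reachable.refl _
  | @cons u w v h p ih =>
    intro hs i
    have hw : w ∈ S := hs w (by simp [SimpleGraph.Walk.support_cons])
    have hs' : ∀ z ∈ p.support, z ∈ S := fun z hz =>
      hs z (by simp [SimpleGraph.Walk.support_cons, hz])
    have hstep : ((twoLift G η).induce {y : V × Bool | y.1 ∈ S}).Adj
        ⟨(u, i), hs u (SimpleGraph.Walk.cons h p).start_mem_support⟩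
        ⟨(w, xor (η s(u, w)) i), hw⟩ :=
        show G.Adj u w ∧ xor (η s(u, w)) i = xor (η s(u, w)) i from ⟨h, rfl⟩
    have hrest := ih hs' (xor (η s(u, w)) i)
    have hxor : xor (walkParity η p) (xor (η s(u, w)) i)
        = xor (walkParity η (SimpleGraph.Walk.cons h p)) i := by
      rw [walkParity_cons]
      cases walkParity η p <;> cases η s(u, w) <;> cases i <;> rfl
    rw [hxor] at hrest
    exact hstep.reachable.trans hrest

lemma foldr_xor_false {l : List Bool} (h : ∀ x ∈ l, x = false) :
    l.foldr xor false = false := by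
  induction l with
  | nil => rfl
  | cons a l ih =>
    have := h a (by simp)
    simp [this, ih (fun x hx => h x (by simp [hx]))]

lemma support_dist_le {c v : V} (p : G.Walk c v) {w : V} (hw : w ∈ p.support) :
    G.dist c w ≤ p.length := by
  classical
  exact (SimpleGraph.dist_le _).trans (SimpleGraph.Walk.length_takeUntil_le p hw)

lemma lift_ball_connected_config (hconn : G.Connected) (η₀ : Sym2 V → Bool)
    {a : V} (c : G.Walk a a) (r : ℕ)
    (hcsupp' : ∀ w ∈ c.support, G.dist a w ≤ r)
    (hcpar : walkParity η₀ c = true) :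
    ((twoLift G η₀).induce
      {y : V × Bool | y.1 ∈ {w : V | G.dist a w ≤ r}}).Connected := by
  classical
  set B : Set V := {w : V | G.dist a w ≤ r} with hB
  have haB : a ∈ B := by simp [hB, SimpleGraph.dist_self]
  set z₀ : {y : V × Bool | y.1 ∈ B} := ⟨(a, false), haB⟩ with hz₀
  have hcsupp : ∀ w ∈ c.support, w ∈ B := hcsupp'
  have hflip : ((twoLift G η₀).induce {y : V × Bool | y.1 ∈ B}).Reachable z₀
      ⟨(a, true), haB⟩ := by
    have := lift_walk_reachable η₀ B c hcsupp false
    rwa [hcpar] at this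
  rw [SimpleGraph.connected_iff]
  refine ⟨?_, ⟨z₀⟩⟩
  rintro ⟨⟨y, i⟩, hy⟩ ⟨⟨y', i'⟩, hy'⟩
  suffices H : ∀ (y : V) (i : Bool) (hy : (y, i).1 ∈ B),
      ((twoLift G η₀).induce {y : V × Bool | y.1 ∈ B}).Reachable z₀ ⟨(y, i), hy⟩ by
    exact (H y i hy).symm.trans (H y' i' hy')
  intro y i hy
  obtain ⟨P, hP⟩ := (hconn a y).exists_walk_length_eq_dist
  have hPsupp : ∀ w ∈ P.support, w ∈ B := by
    intro w hw
    have : G.dist a w ≤ P.length := support_dist_le P hw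
    have hy' : G.dist a y ≤ r := hy
    simp only [hB, Set.mem_setOf_eq]
    omega
  have hmain := lift_walk_reachable η₀ B P hPsupp (xor (walkParity η₀ P) i)
  have hx : xor (walkParity η₀ P) (xor (walkParity η₀ P) i) = i := by
    cases walkParity η₀ P <;> cases i <;> rfl
  rw [hx] at hmain
  have hstart : ((twoLift G η₀).induce {y : V × Bool | y.1 ∈ B}).Reachable z₀
      ⟨(a, xor (walkParity η₀ P) i), haB⟩ := by
    cases h : xor (walkParity η₀ P) i
    · exact SimpleGraph.Reachable.refl _
    · exact hflip
  exact hstart.trans hmain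

end AuxLemmas

lemma bernoulliMeasure_singleton_ge {q : ℝ} (hq : q ∈ Set.Ioo (0 : ℝ) 1) (b : Bool) :
    ENNReal.ofReal (min q (1 - q)) ≤ bernoulliMeasure q {b} := by
  have hple : ENNReal.ofReal q ≤ 1 := by
    rw [← ENNReal.ofReal_one]
    exact ENNReal.ofReal_le_ofReal hq.2.le
  have hinf : ENNReal.ofReal q ⊓ 1 = ENNReal.ofReal q := inf_eq_left.mpr hple
  have h1q : (1 : ENNReal) - ENNReal.ofReal q = ENNReal.ofReal (1 - q) := by
    rw [ENNReal.ofReal_sub _ hq.1.le, ENNReal.ofReal_one]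
  cases b
  · have : bernoulliMeasure q {false} = ENNReal.ofReal (1 - q) := by
      simp [_root_.bernoulliMeasure, hinf, Measure.dirac_apply, h1q]
    rw [this]
    exact ENNReal.ofReal_le_ofReal (min_le_right _ _)
  · have : bernoulliMeasure q {true} = ENNReal.ofReal q := by
      simp [_root_.bernoulliMeasure, hinf, Measure.dirac_apply]
    rw [this]
    exact ENNReal.ofReal_le_ofReal (min_le_left _ _)

lemma bernoulli_cylinder_ge {ι : Type*} {μ : Measure (ι → Bool)} {q : ℝ}
    (h : IsBernoulliFamily μ q) (hq : q ∈ Set.Ioo (0 : ℝ) 1) (S : Finset ι) (b : ι → Bool) :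
    ENNReal.ofReal (min q (1 - q)) ^ S.card ≤ μ {ω | ∀ i ∈ S, ω i = b i} := by
  obtain ⟨hprob, hind, hmarg⟩ := h
  have hset : {ω : ι → Bool | ∀ i ∈ S, ω i = b i}
      = ⋂ i ∈ S, (fun ω : ι → Bool => ω i) ⁻¹' {b i} := by
    ext ω; simp [Set.mem_iInter]
  have hmeas := hind.measure_inter_preimage_eq_mul S
    (sets := fun i => {b i}) (fun i _ => measurableSet_singleton _)
  rw [hset, hmeas]
  have hmarg' : ∀ i ∈ S, ENNReal.ofReal (min q (1 - q))
      ≤ μ ((fun ω : ι → Bool => ω i) ⁻¹' {b i}) := by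
    intro i _
    have : μ ((fun ω : ι → Bool => ω i) ⁻¹' {b i}) = (μ.map (fun ω => ω i)) {b i} := by
      rw [Measure.map_apply (measurable_pi_apply i) (measurableSet_singleton _)]
    rw [this, hmarg i]
    exact bernoulliMeasure_singleton_ge hq (b i)
  calc ENNReal.ofReal (min q (1 - q)) ^ S.card
      = ∏ _i ∈ S, ENNReal.ofReal (min q (1 - q)) := (Finset.prod_const _).symm
    _ ≤ ∏ i ∈ S, μ ((fun ω : ι → Bool => ω i) ⁻¹' {b i}) := Finset.prod_le_prod' hmarg'



/-- **Lemma (connected lifted balls).** Let `G` be infinite, connected, locally finite,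
vertex-transitive and not a tree, and `q ∈ (0,1)`. There exist `r ∈ ℕ` and `p₀ > 0` such that
for every vertex `x` of the 2-lift, the probability that the subgraph of `G_q(η)` induced by
`Z(x,r) = π⁻¹(B_r(π(x)))` is connected is at least `p₀`. -/
theorem lifted_ball_connected {V : Type*} (G : SimpleGraph V)
    (hinf : Infinite V) (hconn : G.Connected)
    (hlf : ∀ v : V, (G.neighborSet v).Finite)
    (htrans : IsVertexTransitive G)
    (hcycle : ¬ G.IsAcyclic)
    (q : ℝ) (hq : q ∈ Set.Ioo (0 : ℝ) 1) :
    ∃ (r : ℕ) (p₀ : ℝ), 0 < p₀ ∧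
      ∀ x : V × Bool, ∀ νq : Measure (Sym2 V → Bool), IsBernoulliFamily νq q →
        p₀ ≤ (νq {η |
          ((twoLift G η).induce {y : V × Bool | G.dist x.1 y.1 ≤ r}).Connected}).toReal := by
  classical
  -- extract a cycle edge
  simp only [SimpleGraph.IsAcyclic] at hcycle
  push_neg at hcycle
  obtain ⟨a, c0, hc0⟩ := hcycle
  have hnil : ¬ c0.Nil := by
    intro h
    exact hc0.ne_nil (SimpleGraph.Walk.nil_iff_eq_nil.mp h)
  obtain ⟨b, hab, Wb, hWeq⟩ := SimpleGraph.Walk.not_nil_iff.mp hnil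
  have hedge : s(a, b) ∉ Wb.edges := by
    have hnodup := hc0.edges_nodup
    rw [hWeq, SimpleGraph.Walk.edges_cons] at hnodup
    exact (List.nodup_cons.mp hnodup).1
  set r : ℕ := Wb.length + 1 with hr
  -- base finite edge set
  have hmin : (0 : ℝ) < min q (1 - q) := lt_min hq.1 (by linarith [hq.2])
  set B₀ : Set V := {w : V | G.dist a w ≤ r} with hB₀
  have hB₀fin : B₀.Finite := ball_finite hconn hlf a r
  have hE₀fin : ((fun p : V × V => s(p.1, p.2)) '' (B₀ ×ˢ B₀)).Finite := (hB₀fin.prod hB₀fin).image _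
  set N : ℕ := hE₀fin.toFinset.card with hN
  refine ⟨r, min q (1 - q) ^ N, pow_pos hmin N, ?_⟩
  intro x νq hν
  have hprob : IsProbabilityMeasure νq := hν.1
  obtain ⟨φ, hφ⟩ := htrans a x.1
  -- translated cycle
  have hab' : G.Adj x.1 (φ b) := by
    rw [← hφ]; exact φ.map_adj_iff.mpr hab
  set Wb' : G.Walk (φ b) x.1 := (Wb.map φ.toHom).copy rfl hφ with hWb'
  have hWb'edges : Wb'.edges = Wb.edges.map (Sym2.map φ) := by
    rw [hWb', SimpleGraph.Walk.edges_copy, SimpleGraph.Walk.edges_map]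
    rfl
  have hedge' : s(x.1, φ b) ∉ Wb'.edges := by
    rw [hWb'edges]
    intro hmem
    obtain ⟨e, he, heq⟩ := List.mem_map.mp hmem
    have : s(x.1, φ b) = Sym2.map φ s(a, b) := by
      rw [Sym2.map_pair_eq, hφ]
    rw [this] at heq
    have := Sym2.map.injective φ.toEquiv.injective heq
    exact hedge (this ▸ he)
  set η₀ : Sym2 V → Bool := fun e => if e = s(x.1, φ b) then true else false with hη₀
  set c' : G.Walk x.1 x.1 := SimpleGraph.Walk.cons hab' Wb' with hc'
  have hc'len : c'.length = r := by
    rw [hc', SimpleGraph.Walk.length_cons, hWb', SimpleGraph.Walk.length_copy,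
      SimpleGraph.Walk.length_map, hr]
  have hcsupp : ∀ w ∈ c'.support, G.dist x.1 w ≤ r := fun w hw =>
    le_trans (support_dist_le c' hw) (le_of_eq hc'len)
  have hcpar : walkParity η₀ c' = true := by
    rw [hc', walkParity_cons]
    have h1 : η₀ s(x.1, φ b) = true := by simp [hη₀]
    have h2 : walkParity η₀ Wb' = false := by
      apply foldr_xor_false
      intro z hz
      obtain ⟨e, he, rfl⟩ := List.mem_map.mp hz
      have hne : e ≠ s(x.1, φ b) := fun hcon => hedge' (hcon ▸ he)
      simp [hη₀, hne]
    simp [h1, h2]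
  have hconn₀ := lift_ball_connected_config hconn η₀ c' r hcsupp hcpar
  -- cylinder event
  set B : Set V := {w : V | G.dist x.1 w ≤ r} with hB
  have hBfin : B.Finite := ball_finite hconn hlf x.1 r
  have hEfin : ((fun p : V × V => s(p.1, p.2)) '' (B ×ˢ B)).Finite := (hBfin.prod hBfin).image _
  set S : Finset (Sym2 V) := hEfin.toFinset with hS
  have hsub : {η : Sym2 V → Bool | ∀ e ∈ S, η e = η₀ e} ⊆
      {η : Sym2 V → Bool |
        ((twoLift G η).induce {y : V × Bool | G.dist x.1 y.1 ≤ r}).Connected} := by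
    intro η hη
    have hgraph : (twoLift G η).induce {y : V × Bool | G.dist x.1 y.1 ≤ r}
        = (twoLift G η₀).induce {y : V × Bool | G.dist x.1 y.1 ≤ r} := by
      ext ⟨⟨u, i⟩, hu⟩ ⟨⟨v, j⟩, hv⟩
      have hmemS : s(u, v) ∈ S := by
        rw [hS, Set.Finite.mem_toFinset]
        exact ⟨(u, v), ⟨hu, hv⟩, rfl⟩
      have heq : η s(u, v) = η₀ s(u, v) := hη s(u, v) hmemS
      show (G.Adj u v ∧ j = xor (η s(u, v)) i) ↔ (G.Adj u v ∧ j = xor (η₀ s(u, v)) i)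
      rw [heq]
    show ((twoLift G η).induce {y : V × Bool | G.dist x.1 y.1 ≤ r}).Connected
    rw [hgraph]
    exact hconn₀
  -- cardinality bound
  have hcard : S.card ≤ N := by
    rw [hS, hN]
    apply Finset.card_le_card_of_injOn (Sym2.map φ.symm)
    · intro e he
      rw [Finset.mem_coe, Set.Finite.mem_toFinset] at he ⊢
      obtain ⟨⟨u, v⟩, ⟨hu, hv⟩, rfl⟩ := he
      refine ⟨(φ.symm u, φ.symm v), ⟨?_, ?_⟩, rfl⟩
      · show G.dist a (φ.symm u) ≤ r
        have := dist_map_iso hconn φ a (φ.symm u)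
        rw [hφ, RelIso.apply_symm_apply] at this
        rw [← this]
        exact hu
      · show G.dist a (φ.symm v) ≤ r
        have := dist_map_iso hconn φ a (φ.symm v)
        rw [hφ, RelIso.apply_symm_apply] at this
        rw [← this]
        exact hv
    · exact (Sym2.map.injective φ.symm.toEquiv.injective).injOn
  -- measure bound
  have hofReal : ENNReal.ofReal (min q (1 - q)) ≤ 1 := by
    apply ENNReal.ofReal_le_one.mpr
    have : min q (1 - q) ≤ q := min_le_left _ _
    linarith [hq.2]
  have hchain : ENNReal.ofReal (min q (1 - q) ^ N) ≤
      νq {η : Sym2 V → Bool |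
        ((twoLift G η).induce {y : V × Bool | G.dist x.1 y.1 ≤ r}).Connected} := by
    calc ENNReal.ofReal (min q (1 - q) ^ N)
        = ENNReal.ofReal (min q (1 - q)) ^ N := ENNReal.ofReal_pow hmin.le N
      _ ≤ ENNReal.ofReal (min q (1 - q)) ^ S.card :=
          pow_le_pow_right_of_le_one' hofReal hcard
      _ ≤ νq {η : Sym2 V → Bool | ∀ e ∈ S, η e = η₀ e} :=
          bernoulli_cylinder_ge hν hq S η₀
      _ ≤ _ := measure_mono hsub
  have hne : νq {η : Sym2 V → Bool |
      ((twoLift G η).induce {y : V × Bool | G.dist x.1 y.1 ≤ r}).Connected} ≠ ⊤ :=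
    measure_ne_top νq _
  have := ENNReal.toReal_mono hne hchain
  rwa [ENNReal.toReal_ofReal (pow_nonneg hmin.le N)] at this
end
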